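/- arXiv:0712.2678 — 4 statements merged into one kernel-verified Lean document; each statement's English description precedes it below -/
import Mathlib

section
/- Let D be a connected acyclic digraph with vertex set V, and let H be a connected convex set of vertices with H ≠ V. Then there exists a vertex v ∈ V \ H such that H ∪ {v} is a connected convex set in D. -/
/-!
Digraphs are given by an arc relation `A : V → V → Prop` on a vertex type `V`.
A directed path from `a` to `b` is encoded as `a :: (l ++ [b])` where the list
satisfies `List.Chain A` (consecutive arcs) and `List.Nodup` (distinct vertices);
`l` is the list of internal vertices.
-/

variable {V : Type*}

/-- A non-empty vertex set `X` is convex if no directed path between two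
vertices of `X` contains a vertex not in `X`. -/
def ConvexIn (A : V → V → Prop) (X : Set V) : Prop :=
  X.Nonempty ∧ ∀ a b : V, ∀ l : List V, a ∈ X → b ∈ X →
    List.Chain A a (l ++ [b]) → (a :: (l ++ [b])).Nodup → ∀ w ∈ l, w ∈ X

/-- A vertex set is connected if the underlying undirected graph induced on it
is connected. -/
def ConnectedIn (A : V → V → Prop) (X : Set V) : Prop :=
  ((SimpleGraph.fromRel A).induce X).Connected

/-- A digraph is acyclic if it has no directed cycle, equivalently no
nontrivial directed closed walk. -/
def AcyclicDigraph (A : V → V → Prop) : Prop :=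
  ∀ v, ¬ Relation.TransGen A v v

/-- A digraph is connected if its underlying undirected graph is connected. -/
def DigraphConnected (A : V → V → Prop) : Prop :=
  (SimpleGraph.fromRel A).Connected

/-- A source is a vertex with in-degree zero. -/
def IsSourceIn (A : V → V → Prop) (v : V) : Prop := ∀ u, ¬ A u v

/-- A sink is a vertex with out-degree zero. -/
def IsSinkIn (A : V → V → Prop) (v : V) : Prop := ∀ u, ¬ A v u

/-- A cut-vertex of a connected digraph: deleting it disconnects the
underlying undirected graph. -/
def IsCutVertexIn (A : V → V → Prop) (v : V) : Prop :=
  ¬ ((SimpleGraph.fromRel A).induce {u | u ≠ v}).Connected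

/-!
In an acyclic digraph a vertex set `X` is convex exactly when every vertex that is reachable
from `X` and from which `X` is reachable lies in `X`. By connectivity some arc joins `H` to its
complement; reversing all arcs if necessary, it enters `H`. Among the vertices outside `H` with
an arc into `H`, pick one, `v`, from which no other such vertex is reachable (acyclicity and
finiteness). A walk from `H` to `v` extends along the arc of `v` into `H`, so it stays in `H`;
a walk from `v` that leaves `H ∪ {v}` and returns to `H` re-enters it through an arc from a
vertex outside `H`, which would be reachable from `v`. Hence `H ∪ {v}` is convex.
-/

open Relation

theorem List.IsChain.pairwise_transGen {α : Type*} {r : α → α → Prop} {l : List α}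
    (h : l.IsChain r) : l.Pairwise (TransGen r) :=
  (h.imp fun _ _ => TransGen.single).pairwise

theorem Relation.TransGen.exists_isChain {α : Type*} {r : α → α → Prop}
    {a b : α} (h : TransGen r a b) : ∃ l, (a :: (l ++ [b])).IsChain r := by
  induction h with
  | single hab => exact ⟨[], by simpa using hab⟩
  | @tail b c _ hbc ih =>
    obtain ⟨l, hl⟩ := ih
    refine ⟨l ++ [b], ?_⟩
    rw [List.append_assoc, List.singleton_append]
    exact List.isChain_cons_split.2 ⟨hl, .cons_cons hbc (.singleton c)⟩

section

variable {A : V → V → Prop} {X H : Set V}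

def ReachConvex (A : V → V → Prop) (X : Set V) : Prop :=
  ∀ a ∈ X, ∀ b ∈ X, ∀ w, TransGen A a w → TransGen A w b → w ∈ X

theorem AcyclicDigraph.nodup_of_isChain (hA : AcyclicDigraph A) {l : List V}
    (h : l.IsChain A) : l.Nodup :=
  have : Std.Irrefl (TransGen A) := ⟨hA⟩
  h.pairwise_transGen.nodup

theorem convexIn_iff_reachConvex (hA : AcyclicDigraph A) :
    ConvexIn A X ↔ X.Nonempty ∧ ReachConvex A X := by
  refine ⟨fun h => ⟨h.1, fun a ha b hb w haw hwb => ?_⟩, fun ⟨hne, h⟩ => ⟨hne, ?_⟩⟩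
  · obtain ⟨l₁, h₁⟩ := haw.exists_isChain
    obtain ⟨l₂, h₂⟩ := hwb.exists_isChain
    have hc : (a :: ((l₁ ++ w :: l₂) ++ [b])).IsChain A := by
      rw [List.append_assoc, List.cons_append]
      exact List.isChain_cons_split.2 ⟨h₁, h₂⟩
    exact h.2 a b (l₁ ++ w :: l₂) ha hb hc (hA.nodup_of_isChain hc) w (by simp)
  · intro a b l ha hb hc _ w hw
    have hp := List.IsChain.pairwise_transGen (r := A) hc
    simp only [List.pairwise_cons, List.pairwise_append] at hp
    exact h a ha b hb w (hp.1 w (by simp [hw])) (hp.2.2.2 w hw b (by simp))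

theorem ReachConvex.flip (h : ReachConvex A X) : ReachConvex (flip A) X :=
  fun a ha b hb w haw hwb => h b hb a ha w (transGen_swap.1 hwb) (transGen_swap.1 haw)

theorem AcyclicDigraph.flip (hA : AcyclicDigraph A) : AcyclicDigraph (flip A) :=
  fun v hv => hA v (transGen_swap.1 hv)

theorem connectedIn_flip : ConnectedIn (flip A) X ↔ ConnectedIn A X := by
  have : SimpleGraph.fromRel (flip A) = SimpleGraph.fromRel A := by
    ext; simp only [SimpleGraph.fromRel_adj, flip]; tauto
  rw [ConnectedIn, ConnectedIn, this]

theorem AcyclicDigraph.exists_maximal [Finite V] (hA : AcyclicDigraph A) {S : Set V}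
    (hS : S.Nonempty) : ∃ v ∈ S, ∀ w ∈ S, ¬ TransGen A v w := by
  have : IsTrans V (Function.swap (TransGen A)) := ⟨fun _ _ _ hab hbc => hbc.trans hab⟩
  have : Std.Irrefl (Function.swap (TransGen A)) := ⟨hA⟩
  exact (Finite.wellFounded_of_trans_of_irrefl _).has_min S hS

theorem exists_arc_into_of_transGen {w b : V} (h : TransGen A w b) (hw : w ∉ H) (hb : b ∈ H) :
    ∃ u ∉ H, (∃ h ∈ H, A u h) ∧ ReflTransGen A w u := by
  induction h using TransGen.head_induction_on with
  | single hwb => exact ⟨_, hw, ⟨_, hb, hwb⟩, .refl⟩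
  | @head w c hwc _ ih =>
    by_cases hc : c ∈ H
    · exact ⟨w, hw, ⟨c, hc, hwc⟩, .refl⟩
    · obtain ⟨u, hu, harc, hcu⟩ := ih hc
      exact ⟨u, hu, harc, .head hwc hcu⟩

theorem ReachConvex.union_singleton (hA : AcyclicDigraph A) (hH : ReachConvex A H)
    {v h₀ : V} (hh₀ : h₀ ∈ H) (hvh₀ : A v h₀)
    (hmax : ∀ u ∉ H, ∀ h ∈ H, A u h → ¬ TransGen A v u) : ReachConvex A (H ∪ {v}) := by
  rintro a (ha | rfl) b (hb | rfl) w haw hwb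
  · exact .inl (hH a ha b hb w haw hwb)
  · exact .inl (hH a ha h₀ hh₀ w haw (hwb.tail hvh₀))
  · by_contra hw
    obtain ⟨u, hu, ⟨h, hh, huh⟩, hwu⟩ :=
      exists_arc_into_of_transGen hwb (fun hwH => hw (.inl hwH)) hb
    exact hmax u hu h hh huh (haw.trans_left hwu)
  · exact (hA _ (haw.trans hwb)).elim

theorem ConnectedIn.union_singleton (hH : ConnectedIn A H) {v x : V} (hx : x ∈ H)
    (hadj : (SimpleGraph.fromRel A).Adj x v) : ConnectedIn A (H ∪ {v}) :=
  SimpleGraph.connected_induce_union hH.preconnected .of_subsingleton hx rfl hadj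

theorem exists_reachConvex_extension [Finite V] (hA : AcyclicDigraph A) (hHc : ConnectedIn A H)
    (hH : ReachConvex A H) (harc : ∃ w ∉ H, ∃ h ∈ H, A w h) :
    ∃ v ∉ H, ConnectedIn A (H ∪ {v}) ∧ ReachConvex A (H ∪ {v}) := by
  obtain ⟨v, ⟨hv, h₀, hh₀, hvh₀⟩, hmax⟩ :=
    hA.exists_maximal (S := {w | w ∉ H ∧ ∃ h ∈ H, A w h}) harc
  refine ⟨v, hv, hHc.union_singleton hh₀ ?_, hH.union_singleton hA hh₀ hvh₀ ?_⟩
  · exact (SimpleGraph.fromRel_adj _ _ _).2 ⟨fun h => hv (h ▸ hh₀), .inr hvh₀⟩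
  · exact fun u hu h hh huh => hmax u ⟨hu, h, hh, huh⟩

end

/-- If `H ≠ V` is a connected convex set of a connected acyclic digraph, it can
be extended by one vertex to a connected convex set. -/
theorem stmt_0 {V : Type*} [Fintype V] (A : V → V → Prop)
    (hconn : DigraphConnected A) (hacyc : AcyclicDigraph A)
    (H : Set V) (hHc : ConnectedIn A H) (hHx : ConvexIn A H)
    (hne : H ≠ Set.univ) :
    ∃ v ∈ Set.univ \ H, ConnectedIn A (H ∪ {v}) ∧ ConvexIn A (H ∪ {v}) := by
  obtain ⟨⟨h, hh⟩, hHr⟩ := (convexIn_iff_reachConvex hacyc).1 hHx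
  obtain ⟨y, hy⟩ := (Set.ne_univ_iff_exists_notMem H).1 hne
  obtain ⟨⟨⟨x, z⟩, hadj⟩, -, hx, hz⟩ :=
    (hconn.preconnected h y).some.exists_boundary_dart H hh hy
  suffices ∃ v ∉ H, ConnectedIn A (H ∪ {v}) ∧ ReachConvex A (H ∪ {v}) by
    obtain ⟨v, hv, hc, hr⟩ := this
    exact ⟨v, ⟨trivial, hv⟩, hc,
      (convexIn_iff_reachConvex hacyc).2 ⟨⟨x, .inl hx⟩, hr⟩⟩
  obtain ⟨-, hxz | hzx⟩ := (SimpleGraph.fromRel_adj _ _ _).1 hadj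
  · obtain ⟨v, hv, hc, hr⟩ := exists_reachConvex_extension hacyc.flip
      (connectedIn_flip.2 hHc) hHr.flip ⟨z, hz, x, hx, hxz⟩
    exact ⟨v, hv, connectedIn_flip.1 hc, hr.flip⟩
  · exact exists_reachConvex_extension hacyc hHc hHr ⟨z, hz, x, hx, hzx⟩
end

section
/- Every connected acyclic digraph of order n ≥ 2 contains at least two vertices v such that v is a source or a sink of D, and v is not a cut-vertex of D. -/
/-!
Digraphs are given by an arc relation `A : V → V → Prop` on a vertex type `V`.
A directed path from `a` to `b` is encoded as `a :: (l ++ [b])` where the list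
satisfies `List.Chain A` (consecutive arcs) and `List.Nodup` (distinct vertices);
`l` is the list of internal vertices.
-/

variable {V : Type*}

/-!
Induct on the vertex set `S` of a connected induced subgraph. If no vertex is a cut vertex of
`G[S]`, a source and a sink of `S` will do; they differ because in a connected graph with at
least two vertices every vertex has a neighbour. Otherwise let `c` be a cut vertex and `C` a
component of `G[S \ {c}]`. The set `C ∪ {c}` is smaller than `S` and induces a connected graph,
so by induction it has a non-cut source or sink `x ≠ c`. All neighbours of `x` lie in `C ∪ {c}`,
so `x` is still a source or sink in `S`; and `G[S \ {x}]` is the union of the connected graphs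
`G[(C ∪ {c}) \ {x}]` and `G[S \ C]`, which meet at `c`. Two different components yield two
different vertices.

Only one feature of "source or sink" matters: it passes from `W` to `S` at a vertex all of whose
neighbours in `S` lie in `W`. So the induction works for any property `P` with this feature.
-/

namespace SimpleGraph

variable {G : SimpleGraph V}

def IsNonCutVertex (G : SimpleGraph V) (S : Set V) (v : V) : Prop :=
  v ∈ S ∧ (G.induce (S \ {v})).Connected

section Closed

variable {S U : Set V} {c : V}

lemma exists_walk_support_subset_of_closed
    (hU : ∀ y ∈ U, y ≠ c → ∀ z ∈ S, G.Adj y z → z ∈ U) :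
    ∀ {y : V} (p : G.Walk y c), (∀ z ∈ p.support, z ∈ S) → y ∈ U →
      ∃ q : G.Walk y c, ∀ z ∈ q.support, z ∈ U
  | _, .nil, _, hy => ⟨.nil, by simpa using hy⟩
  | y, .cons (v := z) hyz p, hp, hy => by
    by_cases hyc : y = c
    · subst hyc
      exact ⟨.nil, by simpa using hy⟩
    have hpS : ∀ x ∈ p.support, x ∈ S := fun x hx => hp x (by simp [hx])
    obtain ⟨q, hq⟩ := exists_walk_support_subset_of_closed hU p hpS
      (hU y hy hyc z (hpS z p.start_mem_support) hyz)
    exact ⟨.cons hyz q, by simpa [hy] using hq⟩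

lemma connected_induce_of_closed (hS : (G.induce S).Connected) (hcU : c ∈ U) (hUS : U ⊆ S)
    (hU : ∀ y ∈ U, y ≠ c → ∀ z ∈ S, G.Adj y z → z ∈ U) :
    (G.induce U).Connected := by
  rw [connected_iff_exists_forall_reachable]
  refine ⟨⟨c, hcU⟩, fun ⟨y, hy⟩ => ?_⟩
  obtain ⟨p⟩ := hS.preconnected ⟨y, hUS hy⟩ ⟨c, hUS hcU⟩
  have hpS : ∀ z ∈ (p.map (Embedding.induce S).toHom).support, z ∈ S := by
    intro z hz
    obtain ⟨x, -, rfl⟩ := List.mem_map.mp (Walk.support_map _ p ▸ hz)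
    exact x.2
  obtain ⟨q, hq⟩ := exists_walk_support_subset_of_closed hU _ hpS hy
  exact ⟨(q.induce U hq).reverse⟩

end Closed

section Component

variable {S C : Set V} {c : V}

lemma connected_induce_insert_of_closed (hS : (G.induce S).Connected) (hc : c ∈ S)
    (hCS : C ⊆ S \ {c}) (hC : ∀ y ∈ C, ∀ z ∈ S \ {c}, G.Adj y z → z ∈ C) :
    (G.induce (insert c C)).Connected := by
  refine connected_induce_of_closed hS (Set.mem_insert c C)
    (Set.insert_subset hc fun x hx => (hCS hx).1) ?_
  rintro y (rfl | hy) hyc z hz hyz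
  · exact absurd rfl hyc
  by_cases hzc : z = c
  · exact hzc ▸ Set.mem_insert c C
  · exact Or.inr (hC y hy z ⟨hz, hzc⟩ hyz)

lemma connected_induce_sdiff_of_closed (hS : (G.induce S).Connected) (hc : c ∈ S)
    (hCS : C ⊆ S \ {c}) (hC : ∀ y ∈ C, ∀ z ∈ S \ {c}, G.Adj y z → z ∈ C) :
    (G.induce (S \ C)).Connected := by
  refine connected_induce_of_closed hS ⟨hc, fun h => (hCS h).2 rfl⟩ Set.sdiff_subset ?_
  rintro y ⟨hyS, hyC⟩ hyc z hz hyz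
  exact ⟨hz, fun hzC => hyC (hC z hzC y ⟨hyS, hyc⟩ hyz.symm)⟩

lemma connected_induce_sdiff_singleton_of_closed (hS : (G.induce S).Connected) (hc : c ∈ S)
    (hCS : C ⊆ S \ {c}) (hC : ∀ y ∈ C, ∀ z ∈ S \ {c}, G.Adj y z → z ∈ C)
    {x : V} (hxC : x ∈ C) (hx : (G.induce (insert c C \ {x})).Connected) :
    (G.induce (S \ {x})).Connected := by
  have hcC : c ∉ C := fun h => (hCS h).2 rfl
  have hSx : S \ {x} = (insert c C \ {x}) ∪ (S \ C) := by
    ext y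
    constructor
    · rintro ⟨hyS, hyx⟩
      by_cases hyC : y ∈ C
      exacts [Or.inl ⟨Or.inr hyC, hyx⟩, Or.inr ⟨hyS, hyC⟩]
    · rintro (⟨rfl | hyC, hyx⟩ | ⟨hyS, hyC⟩)
      exacts [⟨hc, hyx⟩, ⟨(hCS hyC).1, hyx⟩, ⟨hyS, fun hyx => hyC (hyx ▸ hxC)⟩]
  rw [hSx]
  exact induce_union_connected hx.preconnected
    (connected_induce_sdiff_of_closed hS hc hCS hC).preconnected
    ⟨c, ⟨Set.mem_insert c C, fun h => hcC (h ▸ hxC)⟩, hc, hcC⟩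

end Component

section Local

variable {P : Set V → V → Prop}

lemma exists_reachable_nonCutVertex {S : Set V} {c : V}
    (IH : ∀ W ⊂ S, (G.induce W).Connected → W.Nontrivial →
      ∃ v w, v ≠ w ∧ P W v ∧ G.IsNonCutVertex W v ∧ P W w ∧ G.IsNonCutVertex W w)
    (mono : ∀ {W S : Set V} {v : V}, (∀ u ∈ S, G.Adj v u → u ∈ W) → P W v → P S v)
    (hS : (G.induce S).Connected) (hc : c ∈ S) {a b : ↥(S \ {c})}
    (hab : ¬ (G.induce (S \ {c})).Reachable a b) :
    ∃ v, ∃ hv : v ∈ S \ {c}, (G.induce (S \ {c})).Reachable a ⟨v, hv⟩ ∧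
      P S v ∧ G.IsNonCutVertex S v := by
  set C : Set V := {x | ∃ hx : x ∈ S \ {c}, (G.induce (S \ {c})).Reachable a ⟨x, hx⟩}
  have hCS : C ⊆ S \ {c} := fun x ⟨hx, _⟩ => hx
  have hC : ∀ y ∈ C, ∀ z ∈ S \ {c}, G.Adj y z → z ∈ C :=
    fun y ⟨hy, hay⟩ z hz hyz => ⟨hz, hay.trans (Adj.reachable (by exact hyz))⟩
  have hWS : insert c C ⊂ S := by
    refine Set.ssubset_iff_of_subset (Set.insert_subset hc fun x hx => (hCS hx).1) |>.mpr
      ⟨b, b.2.1, ?_⟩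
    rintro (hbc | ⟨_, hab'⟩)
    exacts [b.2.2 hbc, hab hab']
  have hWnt : (insert c C).Nontrivial :=
    ⟨c, Set.mem_insert c C, a, Or.inr ⟨a.2, .rfl⟩, fun h => a.2.2 h.symm⟩
  obtain ⟨x, hxc, hPx, hxW, hx⟩ :
      ∃ x, x ≠ c ∧ P (insert c C) x ∧ G.IsNonCutVertex (insert c C) x := by
    obtain ⟨v, w, hvw, hPv, hv, hPw, hw⟩ :=
      IH _ hWS (connected_induce_insert_of_closed hS hc hCS hC) hWnt
    by_cases hvc : v = c
    · exact ⟨w, fun h => hvw (hvc.trans h.symm), hPw, hw⟩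
    · exact ⟨v, hvc, hPv, hv⟩
  have hxC : x ∈ C := hxW.resolve_left hxc
  refine ⟨x, hCS hxC, hxC.2, mono (fun u hu hxu => ?_) hPx, hWS.subset hxW,
    connected_induce_sdiff_singleton_of_closed hS hc hCS hC hxC hx⟩
  by_cases huc : u = c
  · exact huc ▸ Set.mem_insert c C
  · exact Or.inr (hC x hxC u ⟨hu, huc⟩ hxu)

theorem exists_two_nonCutVertex_of_local [Finite V]
    (base : ∀ S : Set V, (G.induce S).Connected → S.Nontrivial →
      ∃ v w, v ≠ w ∧ v ∈ S ∧ w ∈ S ∧ P S v ∧ P S w)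
    (mono : ∀ {W S : Set V} {v : V}, (∀ u ∈ S, G.Adj v u → u ∈ W) → P W v → P S v)
    (S : Set V) (hS : (G.induce S).Connected) (hnt : S.Nontrivial) :
    ∃ v w, v ≠ w ∧ P S v ∧ G.IsNonCutVertex S v ∧ P S w ∧ G.IsNonCutVertex S w := by
  induction S using WellFoundedLT.induction with
  | ind S IH =>
  by_cases hcut : ∀ c ∈ S, (G.induce (S \ {c})).Connected
  · obtain ⟨v, w, hvw, hv, hw, hPv, hPw⟩ := base S hS hnt
    exact ⟨v, w, hvw, hPv, ⟨hv, hcut v hv⟩, hPw, ⟨hw, hcut w hw⟩⟩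
  push Not at hcut
  obtain ⟨c, hc, hdisc⟩ := hcut
  obtain ⟨a, b, hab⟩ : ∃ a b : ↥(S \ {c}), ¬ (G.induce (S \ {c})).Reachable a b := by
    obtain ⟨y, hy, hyc⟩ := hnt.exists_ne c
    have : Nonempty ↥(S \ {c}) := ⟨⟨y, hy, hyc⟩⟩
    have hpre : ¬ (G.induce (S \ {c})).Preconnected := fun h => hdisc ⟨h⟩
    simpa only [Preconnected, not_forall] using hpre
  obtain ⟨v, hv, hav, hPv, hvS⟩ := exists_reachable_nonCutVertex IH mono hS hc hab
  obtain ⟨w, hw, hbw, hPw, hwS⟩ :=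
    exists_reachable_nonCutVertex IH mono hS hc fun hba => hab hba.symm
  refine ⟨v, w, ?_, hPv, hvS, hPw, hwS⟩
  rintro rfl
  exact hab (hav.trans hbw.symm)

end Local

end SimpleGraph

section Digraph

variable {A : V → V → Prop}

def IsSourceOrSinkWithin (A : V → V → Prop) (S : Set V) (v : V) : Prop :=
  (∀ u ∈ S, ¬ A u v) ∨ ∀ u ∈ S, ¬ A v u

lemma isSourceOrSinkWithin_univ {v : V} :
    IsSourceOrSinkWithin A Set.univ v ↔ IsSourceIn A v ∨ IsSinkIn A v := by
  simp [IsSourceOrSinkWithin, IsSourceIn, IsSinkIn]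

lemma AcyclicDigraph.swap (hacyc : AcyclicDigraph A) : AcyclicDigraph (fun u v => A v u) :=
  fun v hv => hacyc v (Relation.transGen_swap.mp hv)

lemma AcyclicDigraph.exists_source_within [Finite V] (hacyc : AcyclicDigraph A) {S : Set V}
    (hS : S.Nonempty) : ∃ s ∈ S, ∀ u ∈ S, ¬ A u s := by
  have : Std.Irrefl (Relation.TransGen A) := ⟨hacyc⟩
  obtain ⟨s, hs, hmin⟩ :=
    (Finite.wellFounded_of_trans_of_irrefl (Relation.TransGen A)).has_min S hS
  exact ⟨s, hs, fun u hu hus => hmin u hu (.single hus)⟩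

lemma AcyclicDigraph.exists_source_ne_sink_within [Finite V] (hacyc : AcyclicDigraph A)
    {S : Set V} (hS : ((SimpleGraph.fromRel A).induce S).Connected) (hnt : S.Nontrivial) :
    ∃ s t, s ≠ t ∧ s ∈ S ∧ t ∈ S ∧
      IsSourceOrSinkWithin A S s ∧ IsSourceOrSinkWithin A S t := by
  obtain ⟨s, hs, hsrc⟩ := hacyc.exists_source_within hnt.nonempty
  obtain ⟨t, ht, hsnk⟩ := hacyc.swap.exists_source_within hnt.nonempty
  refine ⟨s, t, ?_, hs, ht, .inl hsrc, .inr hsnk⟩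
  rintro rfl
  have : Nontrivial S := Set.nontrivial_coe_sort.mpr hnt
  obtain ⟨⟨u, hu⟩, hsu⟩ := not_forall_not.mp (hS.preconnected.not_isIsolated ⟨s, hs⟩)
  rcases (SimpleGraph.fromRel_adj _ _ _).mp hsu with ⟨-, hsu | hus⟩
  exacts [hsnk u hu hsu, hsrc u hu hus]

lemma AcyclicDigraph.isSourceOrSinkWithin_of_adj_mem (hacyc : AcyclicDigraph A)
    {W S : Set V} {v : V}
    (hnbr : ∀ u ∈ S, (SimpleGraph.fromRel A).Adj v u → u ∈ W)
    (hvW : IsSourceOrSinkWithin A W v) : IsSourceOrSinkWithin A S v := by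
  have hnbr' : ∀ u ∈ S, A u v ∨ A v u → u ∈ W := fun u hu huv =>
    hnbr u hu ⟨by rintro rfl; exact hacyc v (huv.elim .single .single), huv.symm⟩
  rcases hvW with hsrc | hsnk
  · exact .inl fun u hu huv => hsrc u (hnbr' u hu (.inl huv)) huv
  · exact .inr fun u hu hvu => hsnk u (hnbr' u hu (.inr hvu)) hvu

lemma isNonCutVertex_univ_iff {v : V} :
    (SimpleGraph.fromRel A).IsNonCutVertex Set.univ v ↔ ¬ IsCutVertexIn A v := by
  rw [IsCutVertexIn, not_not, SimpleGraph.IsNonCutVertex,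
    show Set.univ \ {v} = {u | u ≠ v} by ext; simp]
  exact and_iff_right (Set.mem_univ v)

end Digraph

/-- Every connected acyclic digraph of order at least 2 has at least two
non-cut-vertices each of which is a source or a sink. -/
theorem stmt_1 {V : Type*} [Fintype V] (A : V → V → Prop)
    (hconn : DigraphConnected A) (hacyc : AcyclicDigraph A)
    (hn : 2 ≤ Fintype.card V) :
    ∃ v w : V, v ≠ w ∧
      (IsSourceIn A v ∨ IsSinkIn A v) ∧ ¬ IsCutVertexIn A v ∧
      (IsSourceIn A w ∨ IsSinkIn A w) ∧ ¬ IsCutVertexIn A w := by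
  have hnt : (Set.univ : Set V).Nontrivial :=
    Set.nontrivial_univ_iff.mpr (Fintype.one_lt_card_iff_nontrivial.mp hn)
  obtain ⟨v, w, hvw, hPv, hv, hPw, hw⟩ :=
    (SimpleGraph.fromRel A).exists_two_nonCutVertex_of_local
      (fun _ => hacyc.exists_source_ne_sink_within) hacyc.isSourceOrSinkWithin_of_adj_mem Set.univ
      ((SimpleGraph.induceUnivIso _).connected_iff.mpr hconn) hnt
  exact ⟨v, w, hvw, isSourceOrSinkWithin_univ.mp hPv, isNonCutVertex_univ_iff.mp hv,
    isSourceOrSinkWithin_univ.mp hPw, isNonCutVertex_univ_iff.mp hw⟩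
end

section
/- Let D be a connected acyclic digraph and let s be a vertex of D that is a source or a sink. Then every connected convex set of the digraph D − s (obtained by deleting s) is also a connected convex set of D. -/
/-!
Digraphs are given by an arc relation `A : V → V → Prop` on a vertex type `V`.
A directed path from `a` to `b` is encoded as `a :: (l ++ [b])` where the list
satisfies `List.Chain A` (consecutive arcs) and `List.Nodup` (distinct vertices);
`l` is the list of internal vertices.
-/

variable {V : Type*}

/-!
An internal vertex of a directed path has both an in-arc and an out-arc, so a source or sink `s`
never lies inside a path. Hence every path of `D` between vertices of `X` is already a path of
`D - s`, and convexity transfers; connectivity transfers along the inclusion `D - s ⊆ D`.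
-/

namespace List

theorem IsChain.exists_rel_of_mem_interior {α : Type*} {R : α → α → Prop} {a b w : α}
    {l : List α} (h : IsChain R (a :: (l ++ [b]))) (hw : w ∈ l) :
    (∃ u, R u w) ∧ ∃ v, R w v := by
  obtain ⟨i, hi, rfl⟩ := getElem_of_mem hw
  rw [isChain_iff_getElem] at h
  have hpred := h i (by simp only [length_cons, length_append]; omega)
  have hsucc := h (i + 1) (by simp only [length_cons, length_append]; omega)
  simp only [getElem_cons_succ, getElem_append_left hi] at hpred hsucc
  exact ⟨⟨_, hpred⟩, ⟨_, hsucc⟩⟩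

end List

theorem ConnectedIn.image_val {p : V → Prop} {A : V → V → Prop} {X : Set (Subtype p)}
    (hX : ConnectedIn (fun u v : Subtype p => A u v) X) :
    ConnectedIn A (Subtype.val '' X) := by
  let f : (SimpleGraph.fromRel fun u v : Subtype p => A u v).induce X →g
      (SimpleGraph.fromRel A).induce (Subtype.val '' X) :=
    { toFun := fun x => ⟨x.1.1, Set.mem_image_of_mem _ x.2⟩
      map_rel' := fun {x y} h => by
        simpa [SimpleGraph.fromRel_adj, Subtype.ext_iff] using h }
  refine hX.map f ?_
  rintro ⟨_, x, hx, rfl⟩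
  exact ⟨⟨x, hx⟩, rfl⟩

theorem ConvexIn.image_val {p : V → Prop} {A : V → V → Prop} {X : Set (Subtype p)}
    (hX : ConvexIn (fun u v : Subtype p => A u v) X)
    (hp : ∀ a b l, List.IsChain A (a :: (l ++ [b])) → ∀ w ∈ l, p w) :
    ConvexIn A (Subtype.val '' X) := by
  refine ⟨hX.1.image _, ?_⟩
  rintro _ _ l ⟨a, ha, rfl⟩ ⟨b, hb, rfl⟩ hchain hnodup w hw
  lift l to List (Subtype p) using hp _ _ l hchain
  obtain ⟨w, hwl, rfl⟩ := List.mem_map.mp hw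
  refine ⟨w, hX.2 a b l ha hb ?_ ?_ w hwl, rfl⟩
  · rwa [List.Chain, ← List.isChain_map Subtype.val, List.map_cons, List.map_append]
  · exact List.Nodup.of_map Subtype.val (by simpa using hnodup)

theorem ne_of_mem_interior_of_isSourceIn_or_isSinkIn {A : V → V → Prop} {s a b : V}
    {l : List V} (hs : IsSourceIn A s ∨ IsSinkIn A s)
    (hchain : List.IsChain A (a :: (l ++ [b]))) :
    ∀ w ∈ l, w ≠ s := by
  rintro w hw rfl
  obtain ⟨⟨u, hu⟩, ⟨v, hv⟩⟩ := hchain.exists_rel_of_mem_interior hw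
  exact hs.elim (· u hu) (· v hv)

theorem stmt_6_general {V : Type*} (A : V → V → Prop)
    (s : V) (hs : IsSourceIn A s ∨ IsSinkIn A s)
    (X : Set {u : V // u ≠ s})
    (hXc : ConnectedIn (fun u v : {u : V // u ≠ s} => A u.1 v.1) X)
    (hXx : ConvexIn (fun u v : {u : V // u ≠ s} => A u.1 v.1) X) :
    ConnectedIn A (Subtype.val '' X) ∧ ConvexIn A (Subtype.val '' X) :=
  ⟨hXc.image_val, hXx.image_val fun _ _ _ ↦ ne_of_mem_interior_of_isSourceIn_or_isSinkIn hs⟩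

/-- If `s` is a source or a sink of a connected acyclic digraph `D`, then every
connected convex set of `D - s` is a connected convex set of `D`. -/
theorem stmt_6 {V : Type*} [Fintype V] (A : V → V → Prop)
    (hconn : DigraphConnected A) (hacyc : AcyclicDigraph A)
    (s : V) (hs : IsSourceIn A s ∨ IsSinkIn A s)
    (X : Set {u : V // u ≠ s})
    (hXc : ConnectedIn (fun u v : {u : V // u ≠ s} => A u.1 v.1) X)
    (hXx : ConvexIn (fun u v : {u : V // u ≠ s} => A u.1 v.1) X) :
    ConnectedIn A (Subtype.val '' X) ∧ ConvexIn A (Subtype.val '' X) :=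
  stmt_6_general A s hs X hXc hXx
end

section
/- There exists a family of connected acyclic digraphs D_t of order n_t → ∞ and a constant c such that the average size of a convex set of D_t, namely (∑_{C convex} |C|)/co(D_t), is at most c·√(n_t), and likewise the average size of a connected convex set is at most c·√(n_t). -/
/-!
Digraphs are given by an arc relation `A : V → V → Prop` on a vertex type `V`.
A directed path from `a` to `b` is encoded as `a :: (l ++ [b])` where the list
satisfies `List.Chain A` (consecutive arcs) and `List.Nodup` (distinct vertices);
`l` is the list of internal vertices.
-/

variable {V : Type*}

/-!
Let `left` and `right` be two sets of `s` vertices with all arcs from `left` to `right`, and add a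
transitive tournament on `s²` further vertices, each entered by every smaller vertex; the order is
`n = s² + 2s`. Every nonempty subset of `left ∪ right` is convex, and those meeting both parts are
connected, so there are about `4^s` connected convex sets of size at most `2s`. A convex set
reaching the tournament meets it in an interval, and its trace on `left ∪ right` either lies in
`right` or contains `right`, so there are at most `n² 2^(s+1)` such sets. For `s = 2^(k+6)` these
are negligible even when weighted by their size `≤ n`, and the average size is at most
`2s + 1 ≤ 3√n`.
-/

section General

variable {A : V → V → Prop}

theorem acyclicDigraph_of_lt [Preorder V] (h : ∀ u v, A u v → u < v) : AcyclicDigraph A :=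
  fun v hv => lt_irrefl v <| by
    simpa only [Relation.transGen_eq_self] using Relation.TransGen.mono h v v hv

theorem List.IsChain.transGen_of_mem {a b w : V} {l : List V}
    (h : (a :: (l ++ [b])).IsChain A) (hw : w ∈ l) :
    Relation.TransGen A a w ∧ Relation.TransGen A w b := by
  have := (h.imp fun _ _ => Relation.TransGen.single).pairwise
  simp only [List.pairwise_cons, List.pairwise_append, List.mem_append, List.mem_singleton] at this
  exact ⟨this.1 w (Or.inl hw), this.2.2.2 w hw b rfl⟩

theorem convexIn_of_transGen {X : Set V} (hne : X.Nonempty)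
    (h : ∀ a ∈ X, ∀ b ∈ X, ∀ w, Relation.TransGen A a w → Relation.TransGen A w b → w ∈ X) :
    ConvexIn A X :=
  ⟨hne, fun a b _ ha hb hpath _ w hw =>
    h a ha b hb w (hpath.transGen_of_mem hw).1 (hpath.transGen_of_mem hw).2⟩

theorem ConvexIn.mem_of_arc_arc (hA : AcyclicDigraph A) {X : Set V} (hX : ConvexIn A X)
    {x w y : V} (hx : x ∈ X) (hy : y ∈ X) (hxw : A x w) (hwy : A w y) : w ∈ X := by
  have hxw' : x ≠ w := by rintro rfl; exact hA x (.single hxw)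
  have hwy' : w ≠ y := by rintro rfl; exact hA w (.single hwy)
  have hxy : x ≠ y := by rintro rfl; exact hA x (.tail (.single hxw) hwy)
  exact hX.2 x y [w] hx hy (List.isChain_cons_cons.2 ⟨hxw, List.isChain_pair.2 hwy⟩)
    (by simp [*]) w (List.mem_singleton_self w)

theorem Set.ncard_Icc_set [Finite V] {S T : Set V} (h : S ⊆ T) :
    (Set.Icc S T).ncard = 2 ^ (T \ S).ncard := by
  have himage : (· ∪ S) '' 𝒫 (T \ S) = Set.Icc S T := by
    ext X
    refine ⟨?_, fun hX => ⟨X \ S, Set.sdiff_subset_sdiff_left hX.2, Set.sdiff_union_of_subset hX.1⟩⟩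
    rintro ⟨Y, hY, rfl⟩
    exact ⟨Set.subset_union_right, Set.union_subset (hY.trans Set.sdiff_subset) h⟩
  have hinj : Set.InjOn (· ∪ S) (𝒫 (T \ S)) := fun X hX Y hY hXY => by
    have hdisj {Z : Set V} (hZ : Z ∈ 𝒫 (T \ S)) : (Z ∪ S) \ S = Z := by
      rw [Set.union_sdiff_right, (Set.subset_sdiff.1 hZ).2.sdiff_eq_left]
    rw [← hdisj hX, ← hdisj hY]
    exact congrArg (· \ S) hXY
  rw [← himage, hinj.ncard_image, Set.ncard_powerset]

theorem finsum_mem_ncard_le_of_few_not_subset {α : Type*} [Finite α] (G : Set (Set α))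
    (L : Set α) (hfew : {C ∈ G | ¬ C ⊆ L}.ncard * Nat.card α ≤ G.ncard) :
    ∑ᶠ C ∈ G, (C.ncard : ℝ) ≤ (L.ncard + 1) * G.ncard := by
  classical
  have := Fintype.ofFinite α
  have hsep : {C ∈ G | ¬ C ⊆ L}.toFinset = G.toFinset.filter (¬ · ⊆ L) := by
    ext C; simp
  rw [Set.ncard_eq_toFinset_card', hsep, Set.ncard_eq_toFinset_card' G] at hfew
  rw [finsum_mem_eq_toFinset_sum, Set.ncard_eq_toFinset_card' G,
    ← Finset.sum_filter_add_sum_filter_not _ (· ⊆ L)]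
  have hin : ∑ C ∈ G.toFinset.filter (· ⊆ L), (C.ncard : ℝ) ≤ G.toFinset.card * L.ncard := by
    refine (Finset.sum_le_card_nsmul _ _ (L.ncard : ℝ) fun C hC => ?_).trans ?_
    · exact Nat.cast_le.2 (Set.ncard_le_ncard (Finset.mem_filter.1 hC).2)
    · rw [nsmul_eq_mul]
      exact mul_le_mul_of_nonneg_right (by exact_mod_cast Finset.card_filter_le _ _)
        (Nat.cast_nonneg _)
  have hout : ∑ C ∈ G.toFinset.filter (¬ · ⊆ L), (C.ncard : ℝ) ≤ G.toFinset.card := by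
    refine (Finset.sum_le_card_nsmul _ _ (Nat.card α : ℝ) fun C _ => ?_).trans ?_
    · exact Nat.cast_le.2 (Set.ncard_le_card C)
    · rw [nsmul_eq_mul]
      exact_mod_cast hfew
  linarith

end General

namespace BicliqueTournament

abbrev Vertex (s : ℕ) := Fin (s ^ 2 + 2 * s)

def arc (s : ℕ) (u v : Vertex s) : Prop :=
  u < v ∧ (2 * s ≤ (v : ℕ) ∨ ((u : ℕ) < s ∧ s ≤ (v : ℕ)))

def low (s : ℕ) : Set (Vertex s) := {v | (v : ℕ) < 2 * s}

def left (s : ℕ) : Set (Vertex s) := {v | (v : ℕ) < s}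

def right (s : ℕ) : Set (Vertex s) := low s \ left s

variable {s : ℕ}

theorem acyclicDigraph_arc : AcyclicDigraph (arc s) :=
  acyclicDigraph_of_lt fun _ _ h => h.1

theorem digraphConnected_arc (hs : 0 < s) : DigraphConnected (arc s) := by
  let hub : Vertex s := ⟨2 * s, by nlinarith⟩
  refine (SimpleGraph.connected_iff_exists_forall_reachable _).2 ⟨hub, fun v => ?_⟩
  rcases eq_or_ne hub v with rfl | hne
  · rfl
  refine SimpleGraph.Adj.reachable (SimpleGraph.fromRel_adj _ _ _ |>.2 ⟨hne, ?_⟩)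
  rcases lt_or_gt_of_ne hne with h | h
  · exact .inl ⟨h, .inl (le_of_lt h)⟩
  · exact .inr ⟨h, .inl le_rfl⟩

theorem not_transGen_arc_of_mem_left {u v : Vertex s} (hv : v ∈ left s) :
    ¬ Relation.TransGen (arc s) u v := by
  have hv : (v : ℕ) < s := hv
  have (w : Vertex s) : ¬ arc s w v := fun h => by have := h.2; omega
  intro h
  cases h with
  | single h => exact this u h
  | tail _ h => exact this _ h

theorem mem_left_of_transGen_arc {u v : Vertex s} (h : Relation.TransGen (arc s) u v)
    (hv : v ∈ low s) : u ∈ left s := by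
  have hv : (v : ℕ) < 2 * s := hv
  have (w : Vertex s) (h : arc s w v) : w ∈ left s := by
    have := h.2; show (w : ℕ) < s; omega
  cases h with
  | single h => exact this u h
  | tail huw h => exact absurd huw (not_transGen_arc_of_mem_left (this _ h))

theorem convexIn_of_subset_low {X : Set (Vertex s)} (hne : X.Nonempty) (hX : X ⊆ low s) :
    ConvexIn (arc s) X :=
  convexIn_of_transGen hne fun _ _ _ hb _ hau hub =>
    absurd hau (not_transGen_arc_of_mem_left (mem_left_of_transGen_arc hub (hX hb)))

theorem adj_of_mem_left_of_mem_right {a b : Vertex s} (ha : a ∈ left s) (hb : b ∈ right s) :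
    (SimpleGraph.fromRel (arc s)).Adj a b := by
  have ha : (a : ℕ) < s := ha
  have hb : s ≤ (b : ℕ) := not_lt.1 hb.2
  have hab : a < b := Fin.lt_def.2 (by omega)
  exact (SimpleGraph.fromRel_adj _ _ _).2 ⟨hab.ne, .inl ⟨hab, .inr ⟨ha, hb⟩⟩⟩

def lowFamily (s : ℕ) : Set (Set (Vertex s)) :=
  {X | X ⊆ low s ∧ (X ∩ left s).Nonempty ∧ (X ∩ right s).Nonempty}

theorem connectedIn_of_mem_lowFamily {X : Set (Vertex s)} (hX : X ∈ lowFamily s) :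
    ConnectedIn (arc s) X := by
  obtain ⟨hlow, ⟨a, haX, ha⟩, ⟨b, hbX, hb⟩⟩ := hX
  have hab := adj_of_mem_left_of_mem_right ha hb
  refine (SimpleGraph.connected_iff_exists_forall_reachable _).2 ⟨⟨b, hbX⟩, fun ⟨x, hxX⟩ => ?_⟩
  by_cases hx : x ∈ left s
  · exact (SimpleGraph.Adj.reachable (SimpleGraph.induce_adj.2
      (adj_of_mem_left_of_mem_right hx hb).symm))
  have hbxa : (SimpleGraph.fromRel (arc s)).Adj b a := hab.symm
  have hax := adj_of_mem_left_of_mem_right ha ⟨hlow hxX, hx⟩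
  exact (SimpleGraph.Adj.reachable (G := (SimpleGraph.fromRel (arc s)).induce X)
    (u := ⟨b, hbX⟩) (v := ⟨a, haX⟩) (SimpleGraph.induce_adj.2 hbxa)).trans
    (SimpleGraph.Adj.reachable (SimpleGraph.induce_adj.2 hax))

theorem lowFamily_subset : lowFamily s ⊆ {X | ConnectedIn (arc s) X ∧ ConvexIn (arc s) X} :=
  fun _ hX => ⟨connectedIn_of_mem_lowFamily hX,
    convexIn_of_subset_low (hX.2.1.mono Set.inter_subset_left) hX.1⟩

theorem ncard_setOf_val_lt (n m : ℕ) : {v : Fin n | (v : ℕ) < m}.ncard = min n m := by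
  rw [Set.ncard_eq_toFinset_card', Set.toFinset_ofPred, Fin.card_filter_val_lt]

theorem ncard_left : (left s).ncard = s := by
  rw [left, ncard_setOf_val_lt]; apply min_eq_right; nlinarith

theorem ncard_low : (low s).ncard = 2 * s := by
  rw [low, ncard_setOf_val_lt]; apply min_eq_right; nlinarith

theorem left_subset_low : left s ⊆ low s :=
  fun v (hv : (v : ℕ) < s) => show (v : ℕ) < 2 * s by omega

theorem right_subset_low : right s ⊆ low s := Set.sdiff_subset

theorem ncard_right : (right s).ncard = s := by
  rw [right, Set.ncard_sdiff left_subset_low, ncard_low, ncard_left]; omega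

theorem two_pow_le_ncard_lowFamily (hs : 0 < s) : 2 ^ (2 * s - 2) ≤ (lowFamily s).ncard := by
  let a : Vertex s := ⟨0, by positivity⟩
  let b : Vertex s := ⟨s, by nlinarith⟩
  have ha : a ∈ left s := hs
  have hb : b ∈ right s := ⟨show s < 2 * s by omega, lt_irrefl s⟩
  have hab : ({a, b} : Set (Vertex s)) ⊆ low s :=
    Set.insert_subset (left_subset_low ha) (Set.singleton_subset_iff.2 hb.1)
  have hIcc : Set.Icc {a, b} (low s) ⊆ lowFamily s := fun X hX =>
    ⟨hX.2, ⟨a, hX.1 (Set.mem_insert a _), ha⟩, ⟨b, hX.1 (Set.mem_insert_of_mem a rfl), hb⟩⟩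
  calc 2 ^ (2 * s - 2) = (Set.Icc {a, b} (low s)).ncard := by
        rw [Set.ncard_Icc_set hab, Set.ncard_sdiff hab, ncard_low,
          Set.ncard_pair (Fin.ne_of_val_ne hs.ne)]
    _ ≤ (lowFamily s).ncard := Set.ncard_le_ncard hIcc

theorem sdiff_low_eq_Icc_of_convexIn {C : Set (Vertex s)} (hC : ConvexIn (arc s) C)
    (hne : (C \ low s).Nonempty) : ∃ m M : Vertex s, C \ low s = Set.Icc m M := by
  obtain ⟨m, hm, hmin⟩ := Set.exists_min_image _ id (Set.toFinite _) hne
  obtain ⟨M, hM, hmax⟩ := Set.exists_max_image _ id (Set.toFinite _) hne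
  refine ⟨m, M, Set.Subset.antisymm (fun x hx => ⟨hmin x hx, hmax x hx⟩) fun x hx => ?_⟩
  have hm2 : 2 * s ≤ (m : ℕ) := not_lt.1 hm.2
  have hx2 : 2 * s ≤ (x : ℕ) := hm2.trans (Fin.le_def.1 hx.1)
  refine ⟨?_, not_lt.2 hx2⟩
  rcases hx.1.eq_or_lt with rfl | hmx
  · exact hm.1
  rcases hx.2.eq_or_lt with rfl | hxM
  · exact hM.1
  exact hC.mem_of_arc_arc acyclicDigraph_arc hm.1 hM.1 ⟨hmx, .inl hx2⟩
    ⟨hxM, .inl (hx2.trans (Fin.le_def.1 hxM.le))⟩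

theorem inter_low_mem_of_convexIn {C : Set (Vertex s)} (hC : ConvexIn (arc s) C)
    (hne : (C \ low s).Nonempty) :
    C ∩ low s ∈ Set.Icc ∅ (right s) ∪ Set.Icc (right s) (low s) := by
  by_cases hleft : (C ∩ left s).Nonempty
  · obtain ⟨a, haC, ha⟩ := hleft
    obtain ⟨y, hyC, hy⟩ := hne
    have ha : (a : ℕ) < s := ha
    have hy : 2 * s ≤ (y : ℕ) := not_lt.1 hy
    refine .inr ⟨fun b hb => ⟨?_, hb.1⟩, Set.inter_subset_right⟩
    have hb1 : (b : ℕ) < 2 * s := hb.1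
    have hb2 : s ≤ (b : ℕ) := not_lt.1 hb.2
    exact hC.mem_of_arc_arc acyclicDigraph_arc haC hyC
      ⟨Fin.lt_def.2 (by omega), .inr ⟨ha, hb2⟩⟩ ⟨Fin.lt_def.2 (by omega), .inl hy⟩
  · exact .inl ⟨Set.empty_subset _, fun x hx => ⟨hx.2, fun hxl => hleft ⟨x, hx.1, hxl⟩⟩⟩

theorem ncard_convexIn_not_subset_low_le :
    {C | ConvexIn (arc s) C ∧ ¬ C ⊆ low s}.ncard ≤ (s ^ 2 + 2 * s) ^ 2 * 2 ^ (s + 1) := by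
  let intervals : Set (Set (Vertex s)) := Set.range fun p : Vertex s × Vertex s => Set.Icc p.1 p.2
  let lowParts : Set (Set (Vertex s)) := Set.Icc ∅ (right s) ∪ Set.Icc (right s) (low s)
  have hintervals : intervals.ncard ≤ (s ^ 2 + 2 * s) ^ 2 := by
    refine (Set.image_univ (f := fun p : Vertex s × Vertex s => Set.Icc p.1 p.2) ▸
      Set.ncard_image_le).trans ?_
    simp [sq]
  have hlowParts : lowParts.ncard ≤ 2 ^ (s + 1) := by
    refine (Set.ncard_union_le _ _).trans ?_
    rw [Set.ncard_Icc_set (Set.empty_subset _), Set.ncard_Icc_set right_subset_low,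
      Set.sdiff_empty, right, Set.sdiff_sdiff_cancel_left left_subset_low, ← right, ncard_right,
      ncard_left]
    omega
  calc {C | ConvexIn (arc s) C ∧ ¬ C ⊆ low s}.ncard ≤ (intervals ×ˢ lowParts).ncard := by
        refine Set.ncard_le_ncard_of_injOn (fun C => (C \ low s, C ∩ low s)) ?_ ?_
        · rintro C ⟨hC : ConvexIn (arc s) C, hnot⟩
          have hne : (C \ low s).Nonempty := Set.sdiff_nonempty.2 hnot
          obtain ⟨m, M, hmM⟩ := sdiff_low_eq_Icc_of_convexIn hC hne
          exact ⟨⟨(m, M), hmM.symm⟩, inter_low_mem_of_convexIn hC hne⟩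
        · intro C _ D _ hCD
          rw [← Set.sdiff_union_inter C (low s), ← Set.sdiff_union_inter D (low s)]
          simp only [Prod.mk.injEq] at hCD
          rw [hCD.1, hCD.2]
    _ ≤ (s ^ 2 + 2 * s) ^ 2 * 2 ^ (s + 1) := by
        rw [Set.ncard_prod]; exact Nat.mul_le_mul hintervals hlowParts

theorem average_ncard_le (hs : 0 < s)
    (hbig : (s ^ 2 + 2 * s) ^ 3 * 2 ^ (s + 1) ≤ 2 ^ (2 * s - 2)) {G : Set (Set (Vertex s))}
    (hconv : ∀ C ∈ G, ConvexIn (arc s) C) (hlow : lowFamily s ⊆ G) :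
    (∑ᶠ C ∈ G, (C.ncard : ℝ)) / G.ncard ≤ 3 * √(Fintype.card (Vertex s)) := by
  have hfew : {C ∈ G | ¬ C ⊆ low s}.ncard * Nat.card (Vertex s) ≤ G.ncard := calc
    _ ≤ (s ^ 2 + 2 * s) ^ 2 * 2 ^ (s + 1) * (s ^ 2 + 2 * s) := by
        rw [Nat.card_eq_fintype_card, Fintype.card_fin]
        refine Nat.mul_le_mul_right _ (le_trans ?_ ncard_convexIn_not_subset_low_le)
        exact Set.ncard_le_ncard fun C hC => ⟨hconv C hC.1, hC.2⟩
    _ = (s ^ 2 + 2 * s) ^ 3 * 2 ^ (s + 1) := by ring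
    _ ≤ (lowFamily s).ncard := hbig.trans (two_pow_le_ncard_lowFamily hs)
    _ ≤ G.ncard := Set.ncard_le_ncard hlow
  have hsqrt : (s : ℝ) ≤ √(Fintype.card (Vertex s)) := by
    rw [Fintype.card_fin, Real.le_sqrt (by positivity) (by positivity)]
    push_cast; nlinarith
  refine div_le_of_le_mul₀ (by positivity) (by positivity) <|
    (finsum_mem_ncard_le_of_few_not_subset G (low s) hfew).trans ?_
  rw [ncard_low]
  have : (2 * s + 1 : ℝ) ≤ 3 * s := by
    have : (1 : ℝ) ≤ s := by exact_mod_cast hs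
    linarith
  push_cast
  gcongr
  linarith

theorem order_cube_mul_le (k : ℕ) :
    ((2 ^ (k + 6)) ^ 2 + 2 * 2 ^ (k + 6)) ^ 3 * 2 ^ (2 ^ (k + 6) + 1) ≤
      2 ^ (2 * 2 ^ (k + 6) - 2) := by
  set s := 2 ^ (k + 6) with hs_def
  have hk : 6 * k + 42 ≤ s := by
    have : k < 2 ^ k := Nat.lt_two_pow_self
    rw [hs_def, pow_add]; omega
  have horder : s ^ 2 + 2 * s ≤ 2 ^ (2 * k + 13) := by
    have h1 : s ^ 2 = 2 ^ (2 * k + 12) := by rw [hs_def, ← pow_mul]; ring_nf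
    have h2 : 2 * s ≤ 2 ^ (2 * k + 12) := by
      rw [hs_def, ← pow_succ']; exact Nat.pow_le_pow_right (by norm_num) (by omega)
    have h3 : 2 ^ (2 * k + 13) = 2 * 2 ^ (2 * k + 12) := by rw [pow_succ]; ring
    omega
  calc (s ^ 2 + 2 * s) ^ 3 * 2 ^ (s + 1) ≤ (2 ^ (2 * k + 13)) ^ 3 * 2 ^ (s + 1) := by gcongr
    _ = 2 ^ (6 * k + 40 + s) := by rw [← pow_mul, ← pow_add]; ring_nf
    _ ≤ 2 ^ (2 * s - 2) := Nat.pow_le_pow_right (by norm_num) (by omega)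

end BicliqueTournament

open Filter in
/-- There is a family of connected acyclic digraphs with orders tending to
infinity in which the average size of a convex set, and of a connected convex
set, is `O(√n)`. -/
theorem stmt_17 :
    ∃ (W : ℕ → Type) (A : ∀ k, W k → W k → Prop) (_ : ∀ k, Fintype (W k))
      (c : ℝ), 0 < c ∧
      (∀ k, DigraphConnected (A k) ∧ AcyclicDigraph (A k)) ∧
      Tendsto (fun k => Fintype.card (W k)) atTop atTop ∧
      (∀ k,
        (∑ᶠ C ∈ {X : Set (W k) | ConvexIn (A k) X}, (C.ncard : ℝ)) /
            ({X : Set (W k) | ConvexIn (A k) X}.ncard : ℝ) ≤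
          c * Real.sqrt (Fintype.card (W k)) ∧
        (∑ᶠ C ∈ {X : Set (W k) | ConnectedIn (A k) X ∧ ConvexIn (A k) X},
              (C.ncard : ℝ)) /
            ({X : Set (W k) | ConnectedIn (A k) X ∧
                ConvexIn (A k) X}.ncard : ℝ) ≤
          c * Real.sqrt (Fintype.card (W k))) := by
  open BicliqueTournament in
  refine ⟨fun k => Vertex (2 ^ (k + 6)), fun k => arc (2 ^ (k + 6)), inferInstance, 3,
    by norm_num, fun k => ⟨digraphConnected_arc (Nat.two_pow_pos _), acyclicDigraph_arc⟩, ?_,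
    fun k => ⟨?_, ?_⟩⟩
  · refine tendsto_atTop_mono (fun k => ?_) tendsto_id
    have : k < 2 ^ k := Nat.lt_two_pow_self
    simp only [Fintype.card_fin, id_eq]
    nlinarith [Nat.pow_le_pow_right (show 0 < 2 by norm_num) (Nat.le_add_right k 6)]
  · exact average_ncard_le (Nat.two_pow_pos _) (order_cube_mul_le k) (fun _ hC => hC)
      fun _ hX => (lowFamily_subset hX).2
  · exact average_ncard_le (Nat.two_pow_pos _) (order_cube_mul_le k) (fun _ hC => hC.2)
      lowFamily_subset
end
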